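/- For all positive integers n and k, b(n;k) equals the sum, over all primary partitions π = (b_1, ..., b_k) of n into exactly k parts with b_k ≥ k, of the weight ω(π) = 2^{t(π)}, where t(π) = #{1 ≤ i ≤ k−1 : b_i > b_{i+1}} + (1 if b_k > k, and 0 if b_k = k). -/

import Mathlib

/-!
A partition with Durfee square `k` is determined by its profile: the excesses `e i = b_{i+1} - k`
of its first `k` rows and `f i = c_{i+1} - k` of its first `k` columns, two weakly decreasing
sequences with `r_{i+1} = e i - f i` and `n = k² + ∑ (e i + f i)`. If `e` and `f` drop at the
same step `i → i + 1`, lowering both by one on `[0, i]` keeps the ranks and lowers `n`; if they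
never do, the ranks force `f` (hence `n`) to be minimal. So `π` is a basis partition iff `e` and
`f` have no common descent. Such a pair is determined by `d = e + f`, the profile of a primary
partition, together with the set of descents of `d` at which `e` drops, and every subset of the
`t(π)` descents of `d` occurs.
-/

open Finset
open scoped Classical

namespace BasisPartitions

/-! ### Ordinary partitions -/

/-- The parts of a partition, listed in weakly decreasing order. -/
def sparts {n : ℕ} (π : n.Partition) : List ℕ := π.parts.sort (· ≥ ·)

/-- `conj L j` is the number of parts that are `≥ j`, i.e. the `j`-th part of the
conjugate partition (for `j ≥ 1`). -/
def conj (L : List ℕ) (j : ℕ) : ℕ := L.countP (fun b => j ≤ b)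

/-- The Durfee square size: the largest `k` such that the `k`-th part is `≥ k`. -/
def durfee (L : List ℕ) : ℕ := (List.range L.length).countP (fun i => i + 1 ≤ L.getD i 0)

/-- The `(i+1)`-st successive rank `r_{i+1} = b_{i+1} - c_{i+1}` (0-indexed `i`). -/
def rank (L : List ℕ) (i : ℕ) : ℤ := (L.getD i 0 : ℤ) - (conj L (i + 1) : ℤ)

/-- The successive rank vector `(r_1, ..., r_k)` where `k` is the Durfee square size. -/
def ranks (L : List ℕ) : List ℤ := (List.range (durfee L)).map (rank L)

/-- A basis partition: the partitioned number is minimal among all partitions having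
the same successive rank vector. -/
def IsBasis {n : ℕ} (π : n.Partition) : Prop :=
  ∀ (m : ℕ) (π' : m.Partition), ranks (sparts π') = ranks (sparts π) → n ≤ m

/-- The signature: the number of distinct part sizes below the Durfee square. -/
def sig (L : List ℕ) : ℕ := ((L.drop (durfee L)).dedup).length

/-- `b(n;k)`: the number of basis partitions of `n` with Durfee square size `k`. -/
noncomputable def bCount (n k : ℕ) : ℕ :=
  Nat.card {π : n.Partition // IsBasis π ∧ durfee (sparts π) = k}

/-- `b(n,k,s)`: the number of basis partitions of `n` with Durfee square size `k`
and signature `s`. -/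
noncomputable def bCount3 (n k s : ℕ) : ℕ :=
  Nat.card {π : n.Partition // IsBasis π ∧ durfee (sparts π) = k ∧ sig (sparts π) = s}

/-- `B(n;j)`: the number of basis partitions of `n` with signature `j`. -/
noncomputable def BCount (n j : ℕ) : ℕ :=
  Nat.card {π : n.Partition // IsBasis π ∧ sig (sparts π) = j}

/-- Rogers–Ramanujan condition: exactly `k` parts, consecutive gaps `≥ 2`, last part `≥ 1`. -/
def RR (L : List ℕ) (k : ℕ) : Prop :=
  L.length = k ∧ (∀ i, i + 1 < k → L.getD (i + 1) 0 + 2 ≤ L.getD i 0) ∧ 1 ≤ L.getD (k - 1) 0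

/-- `t(π)` for a Rogers–Ramanujan partition: the number of gaps `> 2`, plus 1 if the
last part is `> 1`. -/
def tRR (L : List ℕ) (k : ℕ) : ℕ :=
  ((Finset.range (k - 1)).filter (fun i => L.getD (i + 1) 0 + 2 < L.getD i 0)).card +
    (if 1 < L.getD (k - 1) 0 then 1 else 0)

/-- Primary condition: exactly `k` parts, each part `≥ k`. -/
def Primary (L : List ℕ) (k : ℕ) : Prop := L.length = k ∧ ∀ x ∈ L, k ≤ x

/-- `t(π)` for a primary partition: the number of strict descents, plus 1 if the
last part is `> k`. -/
def tP (L : List ℕ) (k : ℕ) : ℕ :=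
  ((Finset.range (k - 1)).filter (fun i => L.getD (i + 1) 0 < L.getD i 0)).card +
    (if k < L.getD (k - 1) 0 then 1 else 0)

/-- A complete basis partition: every `j` with `1 ≤ j ≤ k-1` occurs as a part of `π_b`
(a row below the Durfee square) or as a part of `π_r` (a column length strictly to the
right of the Durfee square). -/
def IsComplete {n : ℕ} (π : n.Partition) : Prop :=
  ∀ j : ℕ, 1 ≤ j → j < durfee (sparts π) →
    j ∈ (sparts π).drop (durfee (sparts π)) ∨
      ∃ c : ℕ, durfee (sparts π) < c ∧ conj (sparts π) c = j

/-- `b_c(n)`: the number of complete basis partitions of `n`. -/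
noncomputable def bc (n : ℕ) : ℕ := Nat.card {π : n.Partition // IsBasis π ∧ IsComplete π}

/-! ### Partitions with non-repeating odd parts and their 2-modular graphs -/

/-- Partitions with non-repeating (distinct) odd parts. -/
def Pod {n : ℕ} (π : n.Partition) : Prop := ∀ x, Odd x → π.parts.count x ≤ 1

/-- The size (sum of entries) of the `c`-th column (1-indexed) of the 2-modular graph. -/
def mcolSize (L : List ℕ) (c : ℕ) : ℕ :=
  (L.map (fun x => if 2 * c ≤ x then 2 else if x = 2 * c - 1 then 1 else 0)).sum

/-- The length (number of entries) of the `c`-th column (1-indexed) of the 2-modular graph. -/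
def mcolLen (L : List ℕ) (c : ℕ) : ℕ := L.countP (fun x => 2 * c - 1 ≤ x)

/-- The number of entries in a row of the 2-modular graph recording the part `x`,
namely `⌈x/2⌉`. -/
def mrowLen (x : ℕ) : ℕ := (x + 1) / 2

/-- The 2-modular Durfee square size: the largest `k` with `⌈b_k/2⌉ ≥ k`. -/
def mdurfee (L : List ℕ) : ℕ := (List.range L.length).countP (fun i => 2 * i + 1 ≤ L.getD i 0)

/-- The `(i+1)`-st 2-modular successive rank: (size of row `i+1`) − (size of column `i+1`). -/
def mrank (L : List ℕ) (i : ℕ) : ℤ := (L.getD i 0 : ℤ) - (mcolSize L (i + 1) : ℤ)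

/-- The 2-modular successive rank vector. -/
def mranks (L : List ℕ) : List ℤ := (List.range (mdurfee L)).map (mrank L)

/-- A minimal basis partition in `P_{o,d}`: the partitioned number is minimal among all
partitions with non-repeating odd parts having the same 2-modular successive rank vector. -/
def MinBasis {n : ℕ} (μ : n.Partition) : Prop :=
  Pod μ ∧ ∀ (m : ℕ) (μ' : m.Partition), Pod μ' →
    mranks (sparts μ') = mranks (sparts μ) → n ≤ m

/-- A basis partition in `P_{o,d}`: no row of the 2-modular graph strictly below the Durfee
square has size equal to the size of a column strictly to the right of the Durfee square. -/
def PodBasis {n : ℕ} (π : n.Partition) : Prop :=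
  Pod π ∧ ∀ i, mdurfee (sparts π) ≤ i → i < (sparts π).length →
    ∀ c, mdurfee (sparts π) < c → mcolSize (sparts π) c ≠ (sparts π).getD i 0

/-- The signature of a basis partition in `P_{o,d}`: the number of distinct sizes among the
rows of the 2-modular graph strictly below the Durfee square. -/
def msig (L : List ℕ) : ℕ := ((L.drop (mdurfee L)).dedup).length

/-- The ℓ-signature: the number of distinct lengths among the rows of the 2-modular
graph strictly below the Durfee square. -/
def lsig (L : List ℕ) : ℕ := (((L.drop (mdurfee L)).map mrowLen).dedup).length

/-- `b(n;j)` for `P_{o,d}`: the number of basis partitions of `n` in `P_{o,d}` with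
signature `j`. -/
noncomputable def podB (n j : ℕ) : ℕ := Nat.card {π : n.Partition // PodBasis π ∧ msig (sparts π) = j}

/-- The number of odd parts. -/
def numOdd (L : List ℕ) : ℕ := L.countP (fun x => x % 2 = 1)

/-- A special partition: distinct parts with consecutive differences `≥ 4`, where a
difference equal to `4` is permitted only when both parts are even. -/
def Special (L : List ℕ) : Prop :=
  ∀ i, i + 1 < L.length →
    L.getD (i + 1) 0 + 4 ≤ L.getD i 0 ∧
      (L.getD i 0 = L.getD (i + 1) 0 + 4 → Even (L.getD i 0) ∧ Even (L.getD (i + 1) 0))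

/-- The `i`-th part of a special partition, with the convention that the part just after
the last one is `-2`. -/
def hpart (L : List ℕ) (i : ℕ) : ℤ := if i < L.length then (L.getD i 0 : ℤ) else -2

/-- `ℓ(π)`: the number of gaps `> 4` in a special partition, with the convention
`h_{k+1} = -2`. -/
def ell (L : List ℕ) : ℕ :=
  ((Finset.range L.length).filter (fun i => 4 < hpart L i - hpart L (i + 1))).card

variable {L : List ℕ} {k i j : ℕ}

theorem getD_antitone (hL : L.Pairwise (· ≥ ·)) : Antitone (L.getD · 0) := by
  intro i j hij
  show L.getD j 0 ≤ L.getD i 0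
  by_cases hj : j < L.length
  · rw [List.getD_eq_getElem _ _ hj, List.getD_eq_getElem _ _ (lt_of_le_of_lt hij hj)]
    rcases hij.eq_or_lt with rfl | hlt
    · exact le_rfl
    · exact List.pairwise_iff_getElem.mp hL i j _ hj hlt
  · rw [List.getD_eq_default _ _ (not_lt.mp hj)]
    exact Nat.zero_le _

theorem conj_antitone (L : List ℕ) : Antitone (conj L) := fun _ _ hc =>
  List.countP_mono_left fun _ _ hx => by simp only [decide_eq_true_eq] at hx ⊢; omega

theorem lt_conj_iff (hL : L.Pairwise (· ≥ ·)) (c j : ℕ) :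
    j < conj L c ↔ j < L.length ∧ c ≤ L.getD j 0 := by
  induction L generalizing j with
  | nil => simp [conj]
  | cons a t ih =>
    have ht := ih hL.of_cons
    by_cases hca : c ≤ a
    · cases j with
      | zero => simp [conj, hca]
      | succ j => simpa [conj, hca] using ht j
    · have hzero : conj (a :: t) c = 0 := List.countP_eq_zero.mpr fun x hx => by
        have : x ≤ a := by
          rcases List.mem_cons.mp hx with rfl | hx
          exacts [le_rfl, List.rel_of_pairwise_cons hL hx]
        simp only [decide_eq_true_eq]; omega
      have : (a :: t).getD j 0 ≤ a := by
        simpa using getD_antitone hL (Nat.zero_le j)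
      simp only [hzero, Nat.not_lt_zero, false_iff, not_and, not_le]
      omega

theorem lt_countP_range_iff {m : ℕ} {p : ℕ → Bool}
    (hp : ∀ i j, i ≤ j → j < m → p j → p i) :
    i < (List.range m).countP p ↔ i < m ∧ p i := by
  induction m with
  | zero => simp
  | succ m ih =>
    have ih := ih fun i j hij hj => hp i j hij (by omega)
    rw [List.range_succ, List.countP_append]
    by_cases hm : p m
    · have hall : (List.range m).countP p = m := by
        rw [List.countP_eq_length.mpr fun a ha => hp a m (List.mem_range.mp ha).le (by omega) hm]
        exact List.length_range
      have hlast : [m].countP p = 1 := by simp [hm]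
      rw [hall, hlast]
      exact ⟨fun h => ⟨h, hp i m (by omega) (by omega) hm⟩, fun h => h.1⟩
    · have hlast : [m].countP p = 0 := by simp [hm]
      rw [hlast, add_zero, ih]
      constructor
      · exact fun h => ⟨by omega, h.2⟩
      · rintro ⟨hi, hpi⟩
        exact ⟨lt_of_le_of_ne (Nat.lt_succ_iff.mp hi) (by rintro rfl; exact hm hpi), hpi⟩

theorem lt_durfee_iff (hL : L.Pairwise (· ≥ ·)) :
    i < durfee L ↔ i < L.length ∧ i + 1 ≤ L.getD i 0 := by
  have := lt_countP_range_iff (i := i) (m := L.length) (p := fun i => decide (i + 1 ≤ L.getD i 0))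
    fun i j hij _ hj => by
      simp only [decide_eq_true_eq] at hj ⊢
      have : L.getD j 0 ≤ L.getD i 0 := getD_antitone hL hij
      omega
  simpa only [durfee, decide_eq_true_eq] using this

theorem durfee_le_length (L : List ℕ) : durfee L ≤ L.length :=
  (List.countP_le_length).trans_eq List.length_range

theorem durfee_le_getD (hL : L.Pairwise (· ≥ ·)) (hi : i < durfee L) :
    durfee L ≤ L.getD i 0 := by
  have := (lt_durfee_iff hL).mp (Nat.sub_one_lt_of_lt hi)
  have : L.getD (durfee L - 1) 0 ≤ L.getD i 0 := getD_antitone hL (Nat.le_sub_one_of_lt hi)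
  omega

theorem getD_le_durfee (hL : L.Pairwise (· ≥ ·)) (hi : durfee L ≤ i) :
    L.getD i 0 ≤ durfee L := by
  have hnot := (lt_durfee_iff hL (i := durfee L)).not.mp (lt_irrefl _)
  have : L.getD i 0 ≤ L.getD (durfee L) 0 := getD_antitone hL hi
  by_cases hlen : durfee L < L.length
  · omega
  · rw [List.getD_eq_default _ _ (not_lt.mp hlen)] at this
    omega

theorem durfee_le_conj (hL : L.Pairwise (· ≥ ·)) (hi : i < durfee L) :
    durfee L ≤ conj L (i + 1) := by
  have := (lt_conj_iff hL (i + 1) (durfee L - 1)).mpr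
    ⟨by have := durfee_le_length L; omega,
      by have := durfee_le_getD hL (Nat.sub_one_lt_of_lt hi); omega⟩
  omega

theorem conj_le_durfee (hL : L.Pairwise (· ≥ ·)) (hi : durfee L ≤ i) :
    conj L (i + 1) ≤ durfee L := by
  by_contra h
  have := ((lt_conj_iff hL (i + 1) (durfee L)).mp (by omega)).2
  have := getD_le_durfee hL (le_refl _)
  omega

/-- `rowExcess L k i = b_{i+1} - k` and `colExcess L k i = c_{i+1} - k` (indices start at `0`). -/
def rowExcess (L : List ℕ) (k i : ℕ) : ℕ := L.getD i 0 - k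

def colExcess (L : List ℕ) (k i : ℕ) : ℕ := conj L (i + 1) - k

theorem rowExcess_antitone (hL : L.Pairwise (· ≥ ·)) : Antitone (rowExcess L k) :=
  fun _ _ hij => Nat.sub_le_sub_right (getD_antitone hL hij) k

theorem colExcess_antitone (L : List ℕ) (k : ℕ) : Antitone (colExcess L k) :=
  fun _ _ hij => Nat.sub_le_sub_right (conj_antitone L (Nat.succ_le_succ hij)) k

section DurfeeDecomposition

variable (hL : L.Pairwise (· ≥ ·)) (hd : durfee L = k)
include hL hd

theorem getD_eq_add_rowExcess (hi : i < k) : L.getD i 0 = k + rowExcess L k i := by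
  subst hd; have := durfee_le_getD hL hi; unfold rowExcess; omega

theorem conj_eq_add_colExcess (hi : i < k) : conj L (i + 1) = k + colExcess L k i := by
  subst hd; have := durfee_le_conj hL hi; unfold colExcess; omega

theorem rowExcess_eq_zero (hi : k ≤ i) : rowExcess L k i = 0 := by
  subst hd; exact Nat.sub_eq_zero_of_le (getD_le_durfee hL hi)

theorem colExcess_eq_zero (hi : k ≤ i) : colExcess L k i = 0 := by
  subst hd; exact Nat.sub_eq_zero_of_le (conj_le_durfee hL hi)

theorem ranks_eq_map_excess :
    ranks L = (List.range k).map fun i => (rowExcess L k i : ℤ) - colExcess L k i := by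
  rw [ranks, hd]
  refine List.map_congr_left fun i hi => ?_
  have hi := List.mem_range.mp hi
  rw [rank, getD_eq_add_rowExcess hL hd hi, conj_eq_add_colExcess hL hd hi]
  push_cast; ring

omit hL hd in
theorem sum_eq_sum_countP_le {M : List ℕ} (hM : ∀ x ∈ M, x ≤ k) :
    M.sum = ∑ i ∈ range k, M.countP (fun x => i + 1 ≤ x) := by
  induction M with
  | nil => simp
  | cons a t ih =>
    have hcount : ∑ i ∈ range k, (if i + 1 ≤ a then 1 else 0) = a := by
      rw [sum_boole, Nat.cast_id, show (range k).filter (· + 1 ≤ a) = range a by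
        ext; simp only [mem_filter, mem_range]; have := hM a (by simp); omega, card_range]
    simp only [List.sum_cons, List.countP_cons, decide_eq_true_eq, sum_add_distrib, hcount,
      ih fun x hx => hM x (List.mem_cons_of_mem a hx)]
    ring

omit hL hd in
theorem sum_take_eq_sum_getD (hk : k ≤ L.length) :
    (L.take k).sum = ∑ i ∈ range k, L.getD i 0 := by
  induction k with
  | zero => simp
  | succ k ih =>
    rw [List.sum_take_succ L k (by omega), ih (by omega), sum_range_succ,
      List.getD_eq_getElem _ _ (by omega)]

theorem sum_eq_sq_add_sum_excess :
    L.sum = k * k + ∑ i ∈ range k, (rowExcess L k i + colExcess L k i) := by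
  have hk : k ≤ L.length := hd ▸ durfee_le_length L
  have htake_ge : ∀ x ∈ L.take k, k ≤ x := fun x hx => by
    obtain ⟨i, hi, rfl⟩ := List.mem_iff_getElem.mp hx
    have hi : i < k := by rw [List.length_take] at hi; omega
    rw [List.getElem_take, ← List.getD_eq_getElem _ 0, getD_eq_add_rowExcess hL hd hi]
    exact Nat.le_add_right _ _
  have hdrop_le : ∀ x ∈ L.drop k, x ≤ k := fun x hx => by
    obtain ⟨i, hi, rfl⟩ := List.mem_iff_getElem.mp hx
    rw [List.getElem_drop, ← List.getD_eq_getElem _ 0]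
    subst hd; exact getD_le_durfee hL (Nat.le_add_right _ _)
  have htake : (L.take k).sum = ∑ i ∈ range k, (k + rowExcess L k i) := by
    rw [sum_take_eq_sum_getD hk]
    exact sum_congr rfl fun i hi => getD_eq_add_rowExcess hL hd (mem_range.mp hi)
  have hdrop : (L.drop k).sum = ∑ i ∈ range k, colExcess L k i := by
    rw [sum_eq_sum_countP_le hdrop_le]
    refine sum_congr rfl fun i hi => ?_
    have hsplit := congrArg (List.countP fun x => decide (i + 1 ≤ x)) (List.take_append_drop k L)
    rw [List.countP_append, List.countP_eq_length.mpr fun x hx => by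
      simpa using le_trans (mem_range.mp hi) (htake_ge x hx) , List.length_take_of_le hk] at hsplit
    rw [colExcess, conj, ← hsplit]; omega
  rw [← List.sum_take_add_sum_drop L k, htake, hdrop]
  simp only [sum_add_distrib, sum_const, card_range, smul_eq_mul]
  ring

end DurfeeDecomposition

/-- The partition with Durfee square `k` and profile `(e, f)`: the rows below the square form the
partition conjugate to `f`. -/
def ofProfile (k : ℕ) (e f : ℕ → ℕ) : List ℕ :=
  (List.range k).map (fun i => k + e i) ++
    (List.range (f 0)).map fun j => (List.range k).countP fun i => j + 1 ≤ f i

section Profile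

variable {e f : ℕ → ℕ}

theorem length_ofProfile : (ofProfile k e f).length = k + f 0 := by simp [ofProfile]

theorem getD_ofProfile_of_lt (hi : i < k) : (ofProfile k e f).getD i 0 = k + e i := by
  rw [ofProfile, List.getD_append _ _ _ _ (by simpa using hi),
    List.getD_eq_getElem _ _ (by simpa using hi)]
  simp

theorem getD_ofProfile_add (hj : j < f 0) :
    (ofProfile k e f).getD (k + j) 0 = (List.range k).countP fun i => j + 1 ≤ f i := by
  rw [ofProfile, List.getD_append_right _ _ _ _ (by simp)]
  simp only [List.length_map, List.length_range, Nat.add_sub_cancel_left]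
  rw [List.getD_eq_getElem _ _ (by simpa using hj)]
  simp

theorem lt_countP_range_le_iff (hf : Antitone f) :
    i < (List.range k).countP (fun i => j + 1 ≤ f i) ↔ i < k ∧ j < f i := by
  simpa [Nat.succ_le_iff] using lt_countP_range_iff (i := i) (m := k)
    (p := fun i => decide (j + 1 ≤ f i)) fun a b hab _ hb => by
      simp only [decide_eq_true_eq] at hb ⊢; exact hb.trans (hf hab)

theorem countP_range_le (j : ℕ) : ((List.range k).countP fun i => j + 1 ≤ f i) ≤ k :=
  List.countP_le_length.trans_eq List.length_range

theorem ofProfile_sorted (he : Antitone e) :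
    (ofProfile k e f).Pairwise (· ≥ ·) := by
  refine List.pairwise_append.mpr ⟨?_, ?_, ?_⟩
  · exact List.pairwise_map.mpr <| List.pairwise_lt_range.imp fun hab =>
      Nat.add_le_add_left (he hab.le) k
  · exact List.pairwise_map.mpr <| List.pairwise_lt_range.imp fun hab =>
      List.countP_mono_left fun x _ hx => by
        simp only [decide_eq_true_eq] at hx ⊢; omega
  · intro x hx y hy
    simp only [List.mem_map, List.mem_range] at hx hy
    obtain ⟨i, -, rfl⟩ := hx
    obtain ⟨j, -, rfl⟩ := hy
    exact (countP_range_le j).trans (Nat.le_add_right k (e i))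

theorem ofProfile_pos (hk : 0 < k) (hf : Antitone f) : ∀ x ∈ ofProfile k e f, 0 < x := by
  intro x hx
  simp only [ofProfile, List.mem_append, List.mem_map, List.mem_range] at hx
  rcases hx with ⟨i, -, rfl⟩ | ⟨j, hj, rfl⟩
  · omega
  · exact (lt_countP_range_le_iff hf).mpr ⟨hk, hj⟩

variable (he : Antitone e)
include he

theorem durfee_ofProfile : durfee (ofProfile k e f) = k := by
  refine eq_of_forall_lt_iff fun i => ?_
  rw [lt_durfee_iff (ofProfile_sorted he), length_ofProfile]
  constructor
  · rintro ⟨hlen, hi⟩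
    by_contra hki
    obtain ⟨j, rfl⟩ := Nat.exists_eq_add_of_le (not_lt.mp hki)
    rw [getD_ofProfile_add (by omega)] at hi
    have := countP_range_le (k := k) (f := f) j
    omega
  · intro hi
    rw [getD_ofProfile_of_lt hi]
    omega

theorem conj_ofProfile (hf : Antitone f) (hi : i < k) :
    conj (ofProfile k e f) (i + 1) = k + f i := by
  refine (eq_of_forall_lt_iff fun m => ?_).symm
  rw [lt_conj_iff (ofProfile_sorted he), length_ofProfile]
  rcases lt_or_ge m k with hm | hm
  · rw [getD_ofProfile_of_lt hm]
    omega
  · obtain ⟨j, rfl⟩ := Nat.exists_eq_add_of_le hm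
    have hfi : f i ≤ f 0 := hf (Nat.zero_le i)
    by_cases hj : j < f 0
    · rw [getD_ofProfile_add hj, Nat.succ_le_iff, lt_countP_range_le_iff hf]
      omega
    · omega

theorem rowExcess_ofProfile (he0 : e k = 0) : rowExcess (ofProfile k e f) k = e := by
  funext i
  rcases lt_or_ge i k with hi | hi
  · rw [rowExcess, getD_ofProfile_of_lt hi, Nat.add_sub_cancel_left]
  · rw [rowExcess_eq_zero (ofProfile_sorted he) (durfee_ofProfile he) hi]
    exact (Nat.eq_zero_of_le_zero (he0 ▸ he hi)).symm

theorem colExcess_ofProfile (hf : Antitone f) (hf0 : f k = 0) :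
    colExcess (ofProfile k e f) k = f := by
  funext i
  rcases lt_or_ge i k with hi | hi
  · rw [colExcess, conj_ofProfile he hf hi, Nat.add_sub_cancel_left]
  · rw [colExcess_eq_zero (ofProfile_sorted he) (durfee_ofProfile he) hi]
    exact (Nat.eq_zero_of_le_zero (hf0 ▸ hf hi)).symm

theorem sum_ofProfile (hf : Antitone f) (he0 : e k = 0) (hf0 : f k = 0) :
    (ofProfile k e f).sum = k * k + ∑ i ∈ range k, (e i + f i) := by
  rw [sum_eq_sq_add_sum_excess (ofProfile_sorted he) (durfee_ofProfile he),
    rowExcess_ofProfile he he0, colExcess_ofProfile he hf hf0]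

end Profile

theorem ofProfile_rowExcess_colExcess (hL : L.Pairwise (· ≥ ·)) (hpos : ∀ x ∈ L, 0 < x)
    (hd : durfee L = k) : ofProfile k (rowExcess L k) (colExcess L k) = L := by
  have hk : k ≤ L.length := hd ▸ durfee_le_length L
  have hlen : (ofProfile k (rowExcess L k) (colExcess L k)).length = L.length := by
    have : conj L 1 = L.length := List.countP_eq_length.mpr fun x hx => decide_eq_true (hpos x hx)
    rw [length_ofProfile, colExcess, this]
    omega
  refine List.ext_getElem hlen fun m h₁ h₂ => ?_
  rw [← List.getD_eq_getElem _ 0, ← List.getD_eq_getElem _ 0]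
  rcases lt_or_ge m k with hm | hm
  · rw [getD_ofProfile_of_lt hm, getD_eq_add_rowExcess hL hd hm]
  · obtain ⟨j, rfl⟩ := Nat.exists_eq_add_of_le hm
    have hle : L.getD (k + j) 0 ≤ k := hd ▸ getD_le_durfee hL (hd ▸ Nat.le_add_right k j)
    rw [getD_ofProfile_add (by rw [length_ofProfile] at h₁; omega)]
    refine eq_of_forall_lt_iff fun i => ?_
    rw [lt_countP_range_le_iff (colExcess_antitone L k)]
    rcases lt_or_ge i k with hi | hi
    · have : j < colExcess L k i ↔ k + j < conj L (i + 1) := by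
        rw [conj_eq_add_colExcess hL hd hi]; omega
      rw [and_iff_right hi, this, lt_conj_iff hL, and_iff_right h₂, Nat.succ_le_iff]
    · omega

section Sequences

variable {d e f e' f' : ℕ → ℕ} {p : ℕ → Prop} {S : Finset ℕ}

def descents (d : ℕ → ℕ) (k : ℕ) : Finset ℕ := (range k).filter fun j => d (j + 1) < d j

def NoCommonDescent (e f : ℕ → ℕ) (k : ℕ) : Prop :=
  ∀ i < k, e (i + 1) = e i ∨ f (i + 1) = f i

noncomputable def dropPart (d : ℕ → ℕ) (k : ℕ) (p : ℕ → Prop) (i : ℕ) : ℕ :=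
  ∑ j ∈ Ico i k, if p j then d j - d (j + 1) else 0

theorem sum_Ico_tsub_of_antitone (hd : Antitone d) (hi : i ≤ k) :
    ∑ j ∈ Ico i k, (d j - d (j + 1)) = d i - d k := by
  induction k, hi using Nat.le_induction with
  | base => simp
  | succ k hik ih =>
    rw [sum_Ico_succ_top hik, ih]
    have : d k ≤ d i := hd hik
    have : d (k + 1) ≤ d k := hd (Nat.le_succ k)
    omega

theorem dropPart_antitone : Antitone (dropPart d k p) := fun _ _ h =>
  sum_le_sum_of_subset (Ico_subset_Ico_left h)

theorem dropPart_of_le (hi : k ≤ i) : dropPart d k p i = 0 := by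
  rw [dropPart, Ico_eq_empty (by omega), sum_empty]

theorem dropPart_eq_add (hi : i < k) :
    dropPart d k p i = (if p i then d i - d (i + 1) else 0) + dropPart d k p (i + 1) :=
  sum_eq_sum_Ico_succ_bot hi _

theorem dropPart_add_dropPart_not (hd : Antitone d) (hd0 : d k = 0) (i : ℕ) :
    dropPart d k p i + dropPart d k (¬ p ·) i = d i := by
  rcases le_or_gt i k with hi | hi
  · calc _ = ∑ j ∈ Ico i k, (d j - d (j + 1)) := by
          rw [dropPart, dropPart, ← sum_add_distrib]
          exact sum_congr rfl fun j _ => by split_ifs <;> simp_all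
      _ = d i := by rw [sum_Ico_tsub_of_antitone hd hi, hd0, Nat.sub_zero]
  · rw [dropPart_of_le hi.le, dropPart_of_le hi.le]
    exact (Nat.eq_zero_of_le_zero (hd0 ▸ hd hi.le)).symm

theorem descents_dropPart (hS : S ⊆ descents d k) : descents (dropPart d k (· ∈ S)) k = S := by
  ext j
  simp only [descents, mem_filter, mem_range]
  constructor
  · rintro ⟨hj, hlt⟩
    by_contra hjS
    rw [dropPart_eq_add hj, if_neg hjS] at hlt
    omega
  · intro hjS
    obtain ⟨hj, hdj⟩ := mem_filter.mp (hS hjS)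
    refine ⟨mem_range.mp hj, ?_⟩
    rw [dropPart_eq_add (mem_range.mp hj), if_pos hjS]
    omega

theorem noCommonDescent_dropPart : NoCommonDescent (dropPart d k p) (dropPart d k (¬ p ·)) k := by
  intro i hi
  rw [dropPart_eq_add hi, dropPart_eq_add (p := (¬ p ·)) hi]
  by_cases hpi : p i <;> simp [hpi]

theorem dropPart_descents (he : Antitone e) (he0 : e k = 0) (h : NoCommonDescent e f k) :
    dropPart (e + f) k (· ∈ descents e k) = e := by
  funext i
  rcases le_or_gt i k with hi | hi
  · rw [← Nat.sub_zero (e i), ← he0, ← sum_Ico_tsub_of_antitone he hi]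
    refine sum_congr rfl fun j hj => ?_
    have hjk := (mem_Ico.mp hj).2
    have : e (j + 1) ≤ e j := he (Nat.le_succ j)
    by_cases hjd : j ∈ descents e k
    · have := (mem_filter.mp hjd).2
      have h' : e (j + 1) = e j ∨ f (j + 1) = f j := h j hjk
      rw [if_pos hjd, Pi.add_apply, Pi.add_apply]
      omega
    · rw [if_neg hjd]
      simp only [descents, mem_filter, mem_range, not_and, not_lt] at hjd
      have := hjd hjk
      omega
  · rw [dropPart_of_le hi.le]
    exact (Nat.eq_zero_of_le_zero (he0 ▸ he hi.le)).symm

theorem dropPart_not_descents (he : Antitone e) (hf : Antitone f) (he0 : e k = 0) (hf0 : f k = 0)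
    (h : NoCommonDescent e f k) : dropPart (e + f) k (· ∉ descents e k) = f := by
  funext i
  have := dropPart_add_dropPart_not (d := e + f) (k := k) (p := (· ∈ descents e k)) (he.add hf)
    (by simp [he0, hf0]) i
  rw [dropPart_descents he he0 h, Pi.add_apply] at this
  omega

theorem descents_subset_descents_add (hf : Antitone f) : descents e k ⊆ descents (e + f) k :=
  fun j hj => by
    obtain ⟨hjk, hlt⟩ := mem_filter.mp hj
    have : f (j + 1) ≤ f j := hf (Nat.le_succ j)
    exact mem_filter.mpr ⟨hjk, by simp only [Pi.add_apply]; omega⟩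

/-- Witness: `e` and `f` lowered by one on `[0, i]`. -/
theorem exists_sum_lt_of_commonDescent (he : Antitone e) (hf : Antitone f) (hi : i < k)
    (hei : e (i + 1) < e i) (hfi : f (i + 1) < f i) :
    ∃ e' f' : ℕ → ℕ, Antitone e' ∧ Antitone f' ∧ e' k = e k ∧ f' k = f k ∧
      (∀ j, (e' j : ℤ) - f' j = e j - f j) ∧
      ∑ j ∈ range k, (e' j + f' j) < ∑ j ∈ range k, (e j + f j) := by
  have lower : ∀ g : ℕ → ℕ, Antitone g → g (i + 1) < g i →
      Antitone (fun j => if j ≤ i then g j - 1 else g j) ∧ ∀ j ≤ i, 1 ≤ g j := by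
    intro g hg hgi
    refine ⟨fun a b hab => ?_, fun j hj => by have := hg hj; omega⟩
    have := hg hab
    by_cases hb : b ≤ i
    · simp only [hb, le_trans hab hb, if_true]; omega
    · have := hg (show i + 1 ≤ b by omega)
      by_cases ha : a ≤ i
      · have := hg ha
        simp only [hb, ha, if_true, if_false]; omega
      · simp only [hb, ha, if_false]; omega
  obtain ⟨he', he1⟩ := lower e he hei
  obtain ⟨hf', hf1⟩ := lower f hf hfi
  refine ⟨_, _, he', hf', by simp [hi.not_ge], by simp [hi.not_ge], fun j => ?_, ?_⟩
  · by_cases hj : j ≤ i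
    · have := he1 j hj; have := hf1 j hj
      simp only [hj, if_true]; omega
    · simp only [hj, if_false]
  · refine sum_lt_sum (fun j _ => by split_ifs <;> omega) ⟨i, mem_range.mpr hi, ?_⟩
    simp only [le_refl, if_true]
    omega

theorem sum_le_sum_of_noCommonDescent (hf0 : f k = 0) (h : NoCommonDescent e f k)
    (he' : Antitone e') (hf' : Antitone f') (hr : ∀ j ≤ k, (e j : ℤ) - f j = e' j - f' j) :
    ∑ j ∈ range k, (e j + f j) ≤ ∑ j ∈ range k, (e' j + f' j) := by
  have hff : ∀ i ≤ k, f i ≤ f' i := fun i hi =>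
    Nat.decreasingInduction (motive := fun i _ => f i ≤ f' i) (fun i hi ih => by
      have := hr i hi.le; have := hr (i + 1) hi
      rcases h i hi with h' | h'
      · have : e' (i + 1) ≤ e' i := he' (Nat.le_succ i); omega
      · have : f' (i + 1) ≤ f' i := hf' (Nat.le_succ i); omega) (by omega) hi
  exact sum_le_sum fun j hj => by
    have := hr j (mem_range.mp hj).le; have := hff j (mem_range.mp hj).le
    omega

end Sequences

section Partitions

variable {n : ℕ}

theorem sparts_sorted (π : n.Partition) : (sparts π).Pairwise (· ≥ ·) :=
  Multiset.pairwise_sort _ _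

theorem coe_sparts (π : n.Partition) : (sparts π : Multiset ℕ) = π.parts :=
  Multiset.sort_eq _ _

theorem sparts_pos (π : n.Partition) : ∀ x ∈ sparts π, 0 < x := fun x hx =>
  π.parts_pos (by rwa [← coe_sparts, Multiset.mem_coe])

theorem sum_sparts (π : n.Partition) : (sparts π).sum = n := by
  rw [← Multiset.sum_coe, coe_sparts, π.parts_sum]

theorem sparts_injective : Function.Injective (sparts : n.Partition → List ℕ) := fun π π' h =>
  Nat.Partition.ext (by rw [← coe_sparts, h, coe_sparts])

theorem sparts_ofSums (hL : L.Pairwise (· ≥ ·)) (hpos : ∀ x ∈ L, 0 < x)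
    (hsum : (L : Multiset ℕ).sum = n) : sparts (Nat.Partition.ofSums n L hsum) = L := by
  refine List.Perm.eq_of_pairwise' (sparts_sorted _) hL ?_
  rw [← Multiset.coe_eq_coe, coe_sparts, Nat.Partition.ofSums_parts,
    Multiset.filter_eq_self.mpr fun x hx => (hpos x hx).ne']

end Partitions

section Basis

variable {n : ℕ} {π : n.Partition}

theorem IsBasis.noCommonDescent (hπ : IsBasis π) (hk : 0 < k) (hd : durfee (sparts π) = k) :
    NoCommonDescent (rowExcess (sparts π) k) (colExcess (sparts π) k) k := by
  have hL := sparts_sorted π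
  intro i hi
  by_contra! hne
  obtain ⟨e', f', he', hf', he0, hf0, hr, hlt⟩ := exists_sum_lt_of_commonDescent
    (rowExcess_antitone hL) (colExcess_antitone _ k) hi
    ((rowExcess_antitone hL (Nat.le_succ i)).lt_of_ne hne.1)
    ((colExcess_antitone _ k (Nat.le_succ i)).lt_of_ne hne.2)
  rw [rowExcess_eq_zero hL hd le_rfl] at he0
  rw [colExcess_eq_zero hL hd le_rfl] at hf0
  have hL' := ofProfile_sorted (k := k) (f := f') he'
  have hle := hπ _ (Nat.Partition.ofSums _ (ofProfile k e' f' : Multiset ℕ) rfl) (by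
    rw [sparts_ofSums hL' (ofProfile_pos hk hf'), ranks_eq_map_excess hL' (durfee_ofProfile he'),
      ranks_eq_map_excess hL hd, rowExcess_ofProfile he' he0, colExcess_ofProfile he' hf' hf0]
    exact List.map_congr_left fun j _ => hr j)
  rw [Multiset.sum_coe, sum_ofProfile he' hf' he0 hf0] at hle
  have := sum_eq_sq_add_sum_excess hL hd
  rw [sum_sparts] at this
  omega

theorem isBasis_of_noCommonDescent (hd : durfee (sparts π) = k)
    (h : NoCommonDescent (rowExcess (sparts π) k) (colExcess (sparts π) k) k) : IsBasis π := by
  intro m π' hr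
  set L := sparts π
  set L' := sparts π'
  have hL := sparts_sorted π
  have hL' := sparts_sorted π'
  have hd' : durfee L' = k := by simpa [ranks, hd] using congrArg List.length hr
  rw [ranks_eq_map_excess hL' hd', ranks_eq_map_excess hL hd, List.map_inj_left] at hr
  have hr' : ∀ j ≤ k, (rowExcess L k j : ℤ) - colExcess L k j =
      rowExcess L' k j - colExcess L' k j := by
    intro j hj
    rcases hj.lt_or_eq with hj | hj
    · exact (hr j (List.mem_range.mpr hj)).symm
    · rw [rowExcess_eq_zero hL hd hj.ge, colExcess_eq_zero hL hd hj.ge,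
        rowExcess_eq_zero hL' hd' hj.ge, colExcess_eq_zero hL' hd' hj.ge]
  rw [← sum_sparts π, ← sum_sparts π', sum_eq_sq_add_sum_excess hL hd,
    sum_eq_sq_add_sum_excess hL' hd']
  exact Nat.add_le_add_left (sum_le_sum_of_noCommonDescent (colExcess_eq_zero hL hd le_rfl) h
    (rowExcess_antitone hL') (colExcess_antitone L' k) hr') _

end Basis

theorem durfee_eq_of_primary (hL : L.Pairwise (· ≥ ·)) (hP : Primary L k) : durfee L = k := by
  refine eq_of_forall_lt_iff fun i => ?_
  rw [lt_durfee_iff hL, hP.1]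
  refine ⟨And.left, fun hi => ⟨hi, ?_⟩⟩
  have hi' : i < L.length := hP.1 ▸ hi
  have := hP.2 _ (List.getElem_mem hi')
  rw [List.getD_eq_getElem _ _ hi']
  omega

theorem colExcess_eq_zero_of_primary (hP : Primary L k) : colExcess L k = 0 :=
  funext fun _ => Nat.sub_eq_zero_of_le (hP.1 ▸ List.countP_le_length)

theorem primary_ofProfile {d : ℕ → ℕ} : Primary (ofProfile k d 0) k := by
  refine ⟨by simp [length_ofProfile], fun x hx => ?_⟩
  simp only [ofProfile, Pi.zero_apply, List.range_zero, List.map_nil, List.append_nil,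
    List.mem_map] at hx
  obtain ⟨i, -, rfl⟩ := hx
  exact Nat.le_add_right k (d i)

theorem tP_eq_card_descents (hL : L.Pairwise (· ≥ ·)) (hP : Primary L k) (hk : 0 < k) :
    tP L k = (descents (rowExcess L k) k).card := by
  have hd := durfee_eq_of_primary hL hP
  obtain ⟨m, rfl⟩ : ∃ m, k = m + 1 := ⟨k - 1, by omega⟩
  rw [tP, descents, card_filter, card_filter, Nat.add_sub_cancel, sum_range_succ,
    getD_eq_add_rowExcess hL hd (Nat.lt_succ_self m), rowExcess_eq_zero hL hd le_rfl]
  congr 1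
  · refine sum_congr rfl fun j hj => ?_
    have hj := mem_range.mp hj
    rw [getD_eq_add_rowExcess hL hd (Nat.succ_lt_succ hj),
      getD_eq_add_rowExcess hL hd (hj.trans (Nat.lt_succ_self m))]
    simp
  · simp

section Bijection

variable {n : ℕ} {π : n.Partition} {S : Finset ℕ}

theorem antitone_rowExcess_add_colExcess (π : n.Partition) (k : ℕ) :
    Antitone (rowExcess (sparts π) k + colExcess (sparts π) k) :=
  (rowExcess_antitone (sparts_sorted π)).add (colExcess_antitone _ k)

noncomputable def toPrimary (π : n.Partition) (hd : durfee (sparts π) = k) : n.Partition :=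
  Nat.Partition.ofSums n (ofProfile k (rowExcess (sparts π) k + colExcess (sparts π) k) 0) (by
    have hL := sparts_sorted π
    rw [Multiset.sum_coe, sum_ofProfile (f := 0) (antitone_rowExcess_add_colExcess π k)
      antitone_const (by simp [rowExcess_eq_zero hL hd le_rfl, colExcess_eq_zero hL hd le_rfl]) rfl]
    refine Eq.trans ?_ (sum_sparts π)
    rw [sum_eq_sq_add_sum_excess hL hd]
    simp)

noncomputable def ofPrimary (π : n.Partition) (hP : Primary (sparts π) k) (S : Finset ℕ) :
    n.Partition :=
  Nat.Partition.ofSums n (ofProfile k (dropPart (rowExcess (sparts π) k) k (· ∈ S))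
    (dropPart (rowExcess (sparts π) k) k (· ∉ S))) (by
      have hd := durfee_eq_of_primary (sparts_sorted π) hP
      rw [Multiset.sum_coe, sum_ofProfile dropPart_antitone dropPart_antitone
        (dropPart_of_le le_rfl) (dropPart_of_le le_rfl)]
      refine Eq.trans ?_ (sum_sparts π)
      rw [sum_eq_sq_add_sum_excess (sparts_sorted π) hd, colExcess_eq_zero_of_primary hP]
      simp only [dropPart_add_dropPart_not (rowExcess_antitone (sparts_sorted π))
        (rowExcess_eq_zero (sparts_sorted π) hd le_rfl), Pi.zero_apply, add_zero])

variable (hk : 0 < k)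
include hk

theorem sparts_toPrimary (hd : durfee (sparts π) = k) :
    sparts (toPrimary π hd) = ofProfile k (rowExcess (sparts π) k + colExcess (sparts π) k) 0 :=
  sparts_ofSums (ofProfile_sorted (antitone_rowExcess_add_colExcess π k))
    (ofProfile_pos hk antitone_const) _

theorem primary_toPrimary (hd : durfee (sparts π) = k) : Primary (sparts (toPrimary π hd)) k :=
  sparts_toPrimary hk hd ▸ primary_ofProfile

theorem rowExcess_toPrimary (hd : durfee (sparts π) = k) :
    rowExcess (sparts (toPrimary π hd)) k = rowExcess (sparts π) k + colExcess (sparts π) k := by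
  rw [sparts_toPrimary hk hd, rowExcess_ofProfile (antitone_rowExcess_add_colExcess π k)]
  simp [rowExcess_eq_zero (sparts_sorted π) hd le_rfl,
    colExcess_eq_zero (sparts_sorted π) hd le_rfl]

theorem sparts_ofPrimary (hP : Primary (sparts π) k) (S : Finset ℕ) :
    sparts (ofPrimary π hP S) = ofProfile k (dropPart (rowExcess (sparts π) k) k (· ∈ S))
      (dropPart (rowExcess (sparts π) k) k (· ∉ S)) :=
  sparts_ofSums (ofProfile_sorted dropPart_antitone) (ofProfile_pos hk dropPart_antitone) _

theorem durfee_ofPrimary (hP : Primary (sparts π) k) (S : Finset ℕ) :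
    durfee (sparts (ofPrimary π hP S)) = k := by
  rw [sparts_ofPrimary hk]
  exact durfee_ofProfile dropPart_antitone

theorem rowExcess_ofPrimary (hP : Primary (sparts π) k) (S : Finset ℕ) :
    rowExcess (sparts (ofPrimary π hP S)) k = dropPart (rowExcess (sparts π) k) k (· ∈ S) := by
  rw [sparts_ofPrimary hk]
  exact rowExcess_ofProfile dropPart_antitone (dropPart_of_le le_rfl)

theorem colExcess_ofPrimary (hP : Primary (sparts π) k) (S : Finset ℕ) :
    colExcess (sparts (ofPrimary π hP S)) k = dropPart (rowExcess (sparts π) k) k (· ∉ S) := by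
  rw [sparts_ofPrimary hk]
  exact colExcess_ofProfile dropPart_antitone dropPart_antitone (dropPart_of_le le_rfl)

theorem isBasis_ofPrimary (hP : Primary (sparts π) k) (S : Finset ℕ) :
    IsBasis (ofPrimary π hP S) :=
  isBasis_of_noCommonDescent (durfee_ofPrimary hk hP S) (by
    rw [rowExcess_ofPrimary hk, colExcess_ofPrimary hk]
    exact noCommonDescent_dropPart)

theorem ofPrimary_toPrimary (hd : durfee (sparts π) = k) (hπ : IsBasis π) :
    ofPrimary (toPrimary π hd) (primary_toPrimary hk hd)
      (descents (rowExcess (sparts π) k) k) = π := by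
  have hL := sparts_sorted π
  have hc := hπ.noCommonDescent hk hd
  apply sparts_injective
  rw [sparts_ofPrimary hk, rowExcess_toPrimary hk hd,
    dropPart_descents (rowExcess_antitone hL) (rowExcess_eq_zero hL hd le_rfl) hc,
    dropPart_not_descents (rowExcess_antitone hL) (colExcess_antitone _ k)
      (rowExcess_eq_zero hL hd le_rfl) (colExcess_eq_zero hL hd le_rfl) hc]
  exact ofProfile_rowExcess_colExcess hL (sparts_pos π) hd

theorem toPrimary_ofPrimary (hP : Primary (sparts π) k) (S : Finset ℕ) :
    toPrimary (ofPrimary π hP S) (durfee_ofPrimary hk hP S) = π := by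
  have hL := sparts_sorted π
  have hd := durfee_eq_of_primary hL hP
  apply sparts_injective
  rw [sparts_toPrimary hk, rowExcess_ofPrimary hk, colExcess_ofPrimary hk]
  have hsum : dropPart (rowExcess (sparts π) k) k (· ∈ S) +
      dropPart (rowExcess (sparts π) k) k (· ∉ S) = rowExcess (sparts π) k :=
    funext (dropPart_add_dropPart_not (rowExcess_antitone hL) (rowExcess_eq_zero hL hd le_rfl))
  rw [hsum, ← colExcess_eq_zero_of_primary hP]
  exact ofProfile_rowExcess_colExcess hL (sparts_pos π) hd

theorem descents_ofPrimary (hP : Primary (sparts π) k)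
    (hS : S ⊆ descents (rowExcess (sparts π) k) k) :
    descents (rowExcess (sparts (ofPrimary π hP S)) k) k = S := by
  rw [rowExcess_ofPrimary hk]
  exact descents_dropPart hS

end Bijection

theorem statement3_general (n k : ℕ) (hk : 0 < k) :
    bCount n k =
      ∑ π ∈ Finset.univ.filter (fun π : n.Partition => Primary (sparts π) k),
        2 ^ tP (sparts π) k := by
  rw [bCount, Nat.card_eq_fintype_card, Fintype.card_subtype, sum_congr rfl fun π hπ => by
    rw [tP_eq_card_descents (sparts_sorted π) (mem_filter.mp hπ).2 hk, ← card_powerset],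
    ← card_sigma]
  refine card_bij'
    (fun π hπ => ⟨toPrimary π (mem_filter.mp hπ).2.2, descents (rowExcess (sparts π) k) k⟩)
    (fun x hx => ofPrimary x.1 (mem_filter.mp (mem_sigma.mp hx).1).2 x.2) ?_ ?_ ?_ ?_
  · intro π hπ
    obtain ⟨-, -, hd⟩ := mem_filter.mp hπ
    refine mem_sigma.mpr ⟨mem_filter.mpr ⟨mem_univ _, primary_toPrimary hk hd⟩, ?_⟩
    rw [mem_powerset, rowExcess_toPrimary hk hd]
    exact descents_subset_descents_add (colExcess_antitone _ k)
  · rintro ⟨π, S⟩ hx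
    have hP := (mem_filter.mp (mem_sigma.mp hx).1).2
    exact mem_filter.mpr ⟨mem_univ _, isBasis_ofPrimary hk hP S, durfee_ofPrimary hk hP S⟩
  · intro π hπ
    obtain ⟨-, hπ, hd⟩ := mem_filter.mp hπ
    exact ofPrimary_toPrimary hk hd hπ
  · rintro ⟨π, S⟩ hx
    obtain ⟨hP, hS⟩ := mem_sigma.mp hx
    exact Sigma.ext (toPrimary_ofPrimary hk (mem_filter.mp hP).2 S)
      (heq_of_eq (descents_ofPrimary hk (mem_filter.mp hP).2 (mem_powerset.mp hS)))

theorem statement3 (n k : ℕ) (hn : 0 < n) (hk : 0 < k) :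
    bCount n k =
      ∑ π ∈ Finset.univ.filter (fun π : n.Partition => Primary (sparts π) k),
        2 ^ tP (sparts π) k :=
  statement3_general n k hk

end BasisPartitions
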